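/- arXiv:1907.06276 — 5 statements merged into one kernel-verified Lean document; each statement's English description precedes it below -/
import Mathlib

section
/- Suppose t_0, ..., t_{2k} are distinct points on the circle S^1 = ℝ/2πℤ with no two equal or antipodal, and suppose that for every i, the number of points t_j lying in the open counterclockwise arc (t_i + π, t_i) equals k. Then the diameter of the set {t_0, ..., t_{2k}} in the geodesic metric on S^1 (total circumference 2π) is at least 2πk/(2k+1). -/
noncomputable def SM (k : ℕ) (t : ℝ) : EuclideanSpace ℝ (Fin (2 * k)) :=
  WithLp.toLp 2 (fun i : Fin (2 * k) => if i.val % 2 = 0 then Real.cos ((2 * ((i.val / 2 : ℕ) : ℝ) + 1) * t)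
           else Real.sin ((2 * ((i.val / 2 : ℕ) : ℝ) + 1) * t))

/-- Geodesic distance on the circle ℝ/2πℤ (total circumference 2π). -/
noncomputable def cdist (s t : ℝ) : ℝ := ‖((s - t : ℝ) : AddCircle (2 * Real.pi))‖

/-- `inArcPi a x` : the point `x` lies in the open counterclockwise arc `(a + π, a)` on ℝ/2πℤ. -/
def inArcPi (a x : ℝ) : Prop :=
  ∃ s : ℝ, 0 < s ∧ s < Real.pi ∧ ∃ m : ℤ, x = a + Real.pi + s + 2 * Real.pi * m

/-- Representative of `x` modulo `2π` in `[0, 2π)`. -/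
noncomputable def rep2 (x : ℝ) : ℝ := x - ⌊x / (2 * Real.pi)⌋ * (2 * Real.pi)

lemma two_pi_pos : (0:ℝ) < 2 * Real.pi := by positivity

lemma rep2_nonneg (x : ℝ) : 0 ≤ rep2 x := Int.sub_floor_div_mul_nonneg x two_pi_pos

lemma rep2_lt (x : ℝ) : rep2 x < 2 * Real.pi := Int.sub_floor_div_mul_lt x two_pi_pos

lemma rep2_spec (x : ℝ) : ∃ m : ℤ, x = rep2 x + 2 * Real.pi * m :=
  ⟨⌊x / (2 * Real.pi)⌋, by unfold rep2; ring⟩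

lemma rep2_add_int (x : ℝ) (m : ℤ) : rep2 (x + 2 * Real.pi * m) = rep2 x := by
  unfold rep2
  have h : (x + 2 * Real.pi * m) / (2 * Real.pi) = x / (2 * Real.pi) + m := by
    field_simp
  rw [h, Int.floor_add_intCast]
  push_cast
  ring

lemma rep2_eq_self {x : ℝ} (h0 : 0 ≤ x) (h1 : x < 2 * Real.pi) : rep2 x = x := by
  unfold rep2
  have : ⌊x / (2 * Real.pi)⌋ = 0 := by
    rw [Int.floor_eq_zero_iff, Set.mem_Ico]
    exact ⟨by positivity, (div_lt_one two_pi_pos).mpr h1⟩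
  rw [this]
  push_cast
  ring

lemma inArcPi_iff (a x : ℝ) : inArcPi a x ↔ Real.pi < rep2 (x - a) := by
  constructor
  · rintro ⟨s, hs0, hs1, m, rfl⟩
    have hx : a + Real.pi + s + 2 * Real.pi * m - a = (Real.pi + s) + 2 * Real.pi * m := by ring
    rw [hx, rep2_add_int, rep2_eq_self (by positivity) (by linarith)]
    linarith
  · intro hπ
    obtain ⟨m, hm⟩ := rep2_spec (x - a)
    refine ⟨rep2 (x - a) - Real.pi, by linarith, by linarith [rep2_lt (x - a)], m, by linarith⟩

set_option maxHeartbeats 2000000 in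
theorem diam_lower_bound (k : ℕ) (t : Fin (2 * k + 1) → ℝ)
    (h : ∀ j l : Fin (2 * k + 1), j ≠ l → ∀ m : ℤ, t l - t j ≠ m * Real.pi)
    (hchi : ∀ i, {j : Fin (2 * k + 1) | inArcPi (t i) (t j)}.ncard = k) :
    ∃ i j, 2 * Real.pi * k / (2 * k + 1) ≤ cdist (t i) (t j) := by
  have hπ := Real.pi_pos
  set N : ℤ := (2 * k + 1 : ℤ) with hN
  have hN0 : 0 < N := by omega
  -- reduced points in [0, 2π)
  set u : Fin (2 * k + 1) → ℝ := fun p => rep2 (t p) with hu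
  have hut : ∀ p, ∃ m : ℤ, t p = u p + 2 * Real.pi * m := fun p => rep2_spec (t p)
  have huinj : Function.Injective u := by
    intro p q hpq
    by_contra hne
    obtain ⟨mp, hmp⟩ := hut p
    obtain ⟨mq, hmq⟩ := hut q
    exact h p q hne (2 * (mq - mp)) (by rw [hmp, hmq, hpq]; push_cast; ring)
  -- sorted points
  set σ := Tuple.sort u with hσ
  have hw : StrictMono (u ∘ σ) :=
    (Tuple.monotone_sort u).strictMono_of_injective (huinj.comp σ.injective)
  set w : Fin (2 * k + 1) → ℝ := u ∘ σ with hwdef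
  have hw0 : ∀ p, 0 ≤ w p := fun p => rep2_nonneg _
  have hw2 : ∀ p, w p < 2 * Real.pi := fun p => rep2_lt _
  -- index function and periodic extension
  have hmodlt : ∀ z : ℤ, (z % N).toNat < 2 * k + 1 := by
    intro z
    have h1 : 0 ≤ z % N := Int.emod_nonneg z (by omega)
    have h2 : z % N < N := Int.emod_lt_of_pos z hN0
    omega
  set idx : ℤ → Fin (2 * k + 1) := fun z => ⟨(z % N).toNat, hmodlt z⟩ with hidx
  set v : ℤ → ℝ := fun z => 2 * Real.pi * ((z / N : ℤ) : ℝ) + w (idx z) with hv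
  -- periodicity
  have hvper : ∀ z : ℤ, v (z + N) = v z + 2 * Real.pi := by
    intro z
    have h1 : (z + N) % N = z % N := by
      conv_lhs => rw [show z + N = z + N * 1 by ring]
      exact Int.add_mul_emod_self_left z N 1
    have h2 : (z + N) / N = z / N + 1 := by
      rw [show z + N = z + 1 * N by ring, Int.add_mul_ediv_right z 1 (by omega)]
    have h3 : idx (z + N) = idx z := by simp [hidx, h1]
    rw [hv]
    simp only [h2, h3]
    push_cast
    ring
  -- strict monotonicity
  have hvmono : StrictMono v := by
    apply strictMono_int_of_lt_succ
    intro z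
    have hrel := Int.mul_ediv_add_emod z N
    have hnn : 0 ≤ z % N := Int.emod_nonneg z (by omega)
    have hlt : z % N < N := Int.emod_lt_of_pos z hN0
    by_cases hc : z % N + 1 < N
    · have hq : (z + 1) / N = z / N ∧ (z + 1) % N = z % N + 1 := by
        have := (Int.ediv_emod_unique (a := z + 1) (b := N) (r := z % N + 1)
          (q := z / N) hN0).mpr ⟨by omega, by omega, hc⟩
        exact this
      have hidx1 : idx (z + 1) = ⟨(z % N + 1).toNat, by omega⟩ := by
        simp [hidx, hq.2]
      have hwlt : w (idx z) < w (idx (z + 1)) := by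
        apply hw
        rw [hidx1]
        simp [hidx, Fin.lt_def]
        omega
      rw [hv]
      simp only [hq.1, hidx1]
      simp only [hidx1] at hwlt
      linarith [hwlt]
    · -- z % N = N - 1
      have hq : (z + 1) / N = z / N + 1 ∧ (z + 1) % N = 0 := by
        have hmul : N * (z / N + 1) = N * (z / N) + N := by ring
        have := (Int.ediv_emod_unique (a := z + 1) (b := N) (r := 0)
          (q := z / N + 1) hN0).mpr ⟨by omega, by omega, by omega⟩
        exact this
      rw [hv]
      simp only [hq.1, hq.2]
      have := hw2 (idx z)
      have := hw0 (idx (z + 1))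
      have hcast : ((z / N + 1 : ℤ) : ℝ) = (z / N : ℤ) + 1 := by push_cast; ring
      rw [hcast]
      have h0 : idx (z+1) = ⟨((z+1) % N).toNat, hmodlt _⟩ := rfl
      nlinarith [this]
  -- congruence of v with t
  have hvt : ∀ z : ℤ, ∃ m : ℤ, v z = t (σ (idx z)) + 2 * Real.pi * m := by
    intro z
    obtain ⟨m, hm⟩ := hut (σ (idx z))
    refine ⟨z / N - m, ?_⟩
    rw [hv]
    simp only
    have : w (idx z) = u (σ (idx z)) := rfl
    rw [this, show u (σ (idx z)) = t (σ (idx z)) - 2 * Real.pi * m by linarith [hm]]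
    push_cast
    ring
  have hrepdiff : ∀ z1 z2 : ℤ,
      rep2 (t (σ (idx z2)) - t (σ (idx z1))) = rep2 (v z2 - v z1) := by
    intro z1 z2
    obtain ⟨m1, hm1⟩ := hvt z1
    obtain ⟨m2, hm2⟩ := hvt z2
    have : v z2 - v z1 = (t (σ (idx z2)) - t (σ (idx z1))) + 2 * Real.pi * ((m2 - m1 : ℤ) : ℝ) := by
      rw [hm1, hm2]; push_cast; ring
    rw [this, rep2_add_int]
  -- idx injectivity on short ranges
  have hidxinj : ∀ z1 z2 : ℤ, |z1 - z2| < N → idx z1 = idx z2 → z1 = z2 := by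
    intro z1 z2 habs heq
    have : z1 % N = z2 % N := by
      have := congrArg Fin.val heq
      simp only [hidx] at this
      have h1 : 0 ≤ z1 % N := Int.emod_nonneg z1 (by omega)
      have h2 : 0 ≤ z2 % N := Int.emod_nonneg z2 (by omega)
      omega
    have hdvd : N ∣ (z1 - z2) := by
      have := Int.emod_eq_emod_iff_emod_sub_eq_zero.mp this
      exact Int.dvd_of_emod_eq_zero this
    have := Int.eq_zero_of_abs_lt_dvd hdvd habs
    omega
  -- key claim: v (a + k) - v a < π
  have hkey : ∀ a : ℤ, v (a + k) - v a < Real.pi := by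
    intro a
    rcases Nat.eq_zero_or_pos k with hk0 | hk1
    · subst hk0; simp; linarith
    by_contra hcon
    push_neg at hcon
    -- the k+1 points at offsets o ∈ [k, 2k] are all in the arc
    set i' := σ (idx a) with hi'
    have harc : ∀ o : ℤ, (k : ℤ) ≤ o → o ≤ 2 * k → inArcPi (t i') (t (σ (idx (a + o)))) := by
      intro o ho1 ho2
      have hne : idx (a + o) ≠ idx a := by
        intro heq
        have := hidxinj (a + o) a (by rw [show a + o - a = o by ring]; rw [abs_of_nonneg (by omega)]; omega) heq
        omega
      have hjne : σ (idx (a + o)) ≠ i' := fun hc => hne (σ.injective hc)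
      have hlow : v a < v (a + o) := hvmono (by omega)
      have hhigh : v (a + o) < v a + 2 * Real.pi := by
        have h1 : v (a + o) ≤ v (a + 2 * k) := by
          rcases eq_or_lt_of_le ho2 with hc | hc
          · rw [hc]
          · exact le_of_lt (hvmono (by omega))
        have h2 : v (a + 2 * k) < v (a + N) := hvmono (by omega)
        rw [hvper] at h2
        linarith
      have hrep : rep2 (t (σ (idx (a + o))) - t i') = v (a + o) - v a := by
        rw [hi', hrepdiff a (a + o), rep2_eq_self (by linarith) (by linarith)]
      have hge : Real.pi ≤ v (a + o) - v a := by
        have : v (a + k) ≤ v (a + o) := by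
          rcases eq_or_lt_of_le ho1 with hc | hc
          · rw [← hc]
          · exact le_of_lt (hvmono (by omega))
        linarith
      have hneq : v (a + o) - v a ≠ Real.pi := by
        intro heq
        obtain ⟨m, hm⟩ := rep2_spec (t (σ (idx (a + o))) - t i')
        rw [hrep, heq] at hm
        exact h i' (σ (idx (a + o))) (Ne.symm hjne) (2 * m + 1) (by rw [hm]; push_cast; ring)
      rw [inArcPi_iff, hrep]
      exact lt_of_le_of_ne hge (Ne.symm hneq)
    -- injection into the arc set
    have hinj : Set.InjOn (fun o : ℤ => σ (idx (a + o))) ↑(Finset.Icc (k : ℤ) (2 * k)) := by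
      intro o1 h1 o2 h2 heq
      simp only [Finset.coe_Icc, Set.mem_Icc] at h1 h2
      have := hidxinj (a + o1) (a + o2)
        (by rw [show a + o1 - (a + o2) = o1 - o2 by ring]; rw [abs_sub_lt_iff]; omega)
        (σ.injective heq)
      omega
    have hsub : (fun o : ℤ => σ (idx (a + o))) '' ↑(Finset.Icc (k : ℤ) (2 * k)) ⊆
        {j | inArcPi (t i') (t j)} := by
      rintro _ ⟨o, ho, rfl⟩
      simp only [Finset.coe_Icc, Set.mem_Icc] at ho
      exact harc o ho.1 ho.2
    have hcard := Set.ncard_le_ncard hsub (Set.toFinite _)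
    rw [Set.ncard_image_of_injOn hinj, Set.ncard_coe_finset, Int.card_Icc, hchi i'] at hcard
    omega
  -- sum over one period
  set F : ℕ → ℝ := fun j => ∑ a ∈ Finset.range (2 * k + 1), v (a + j) with hF
  have hFstep : ∀ j : ℕ, F (j + 1) = F j + 2 * Real.pi := by
    intro j
    have htel := Finset.sum_range_sub (fun a : ℕ => v ((a : ℤ) + j)) (2 * k + 1)
    have hper : v (((2 * k + 1 : ℕ) : ℤ) + j) = v (((0 : ℕ) : ℤ) + j) + 2 * Real.pi := by
      rw [show ((2 * k + 1 : ℕ) : ℤ) + (j : ℤ) = (j : ℤ) + N by rw [hN]; push_cast; ring,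
          show ((0 : ℕ) : ℤ) + (j : ℤ) = (j : ℤ) by push_cast; ring]
      exact hvper j
    have hsplit : F (j + 1) - F j
        = ∑ a ∈ Finset.range (2 * k + 1), (v (((a + 1 : ℕ) : ℤ) + j) - v ((a : ℤ) + j)) := by
      rw [hF]
      simp only
      rw [← Finset.sum_sub_distrib]
      apply Finset.sum_congr rfl
      intro a _
      congr 2
      push_cast
      ring
    rw [htel, hper] at hsplit
    linarith
  have hFk : ∀ j : ℕ, F j = F 0 + 2 * Real.pi * j := by
    intro j
    induction j with
    | zero => simp
    | succ m ih => rw [hFstep m, ih]; push_cast; ring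
  -- pigeonhole
  have hsum : ∑ a ∈ Finset.range (2 * k + 1), (v ((a : ℤ) + k) - v a)
      = 2 * Real.pi * k := by
    rw [Finset.sum_sub_distrib]
    have h1 : ∑ a ∈ Finset.range (2 * k + 1), v ((a : ℤ) + k) = F k := by
      rw [hF]
    have h2 : ∑ a ∈ Finset.range (2 * k + 1), v ((a : ℤ)) = F 0 := by
      rw [hF]; apply Finset.sum_congr rfl; intro a _; norm_num
    rw [h1, h2, hFk k]
    ring
  have hex : ∃ a ∈ Finset.range (2 * k + 1),
      2 * Real.pi * (k : ℝ) / (2 * (k : ℝ) + 1) ≤ v ((a : ℤ) + k) - v a := by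
    apply Finset.exists_le_of_sum_le ⟨0, Finset.mem_range.mpr (by omega)⟩
    have hconst : ∑ _a ∈ Finset.range (2 * k + 1),
        (2 * Real.pi * (k : ℝ) / (2 * (k : ℝ) + 1)) = 2 * Real.pi * k := by
      rw [Finset.sum_const, Finset.card_range, nsmul_eq_mul]
      have hc : ((2 * k + 1 : ℕ) : ℝ) = 2 * (k : ℝ) + 1 := by push_cast; ring
      have hne : (2 * (k : ℝ) + 1) ≠ 0 := by positivity
      rw [hc, mul_div_assoc', mul_comm, mul_div_assoc, div_self hne, mul_one]
    rw [hconst, hsum]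
  obtain ⟨a, _ha, haS⟩ := hex
  have hSπ : v ((a : ℤ) + k) - v (a : ℤ) < Real.pi := hkey a
  have hS0 : 0 ≤ v ((a : ℤ) + k) - v (a : ℤ) := by
    rcases Nat.eq_zero_or_pos k with hk0 | hk1
    · subst hk0; norm_num
    · have : v (a : ℤ) < v ((a : ℤ) + k) := hvmono (by omega)
      linarith
  refine ⟨σ (idx ((a : ℤ) + k)), σ (idx (a : ℤ)), ?_⟩
  obtain ⟨m1, hm1⟩ := hvt (a : ℤ)
  obtain ⟨m2, hm2⟩ := hvt ((a : ℤ) + k)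
  have hdiff : t (σ (idx ((a : ℤ) + k))) - t (σ (idx (a : ℤ)))
      = (v ((a : ℤ) + k) - v (a : ℤ)) + 2 * Real.pi * ((m1 - m2 : ℤ) : ℝ) := by
    push_cast
    rw [hm1, hm2]
    ring
  unfold cdist
  rw [hdiff]
  have hz : ((2 * Real.pi * ((m1 - m2 : ℤ) : ℝ) : ℝ) : AddCircle (2 * Real.pi)) = 0 := by
    rw [AddCircle.coe_eq_zero_iff]
    exact ⟨m1 - m2, by rw [zsmul_eq_mul]; ring⟩
  rw [AddCircle.coe_add, hz, add_zero, AddCircle.norm_eq]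
  have hround : round ((2 * Real.pi)⁻¹ * (v ((a : ℤ) + k) - v (a : ℤ))) = 0 := by
    rw [round_eq_zero_iff, Set.mem_Ico]
    constructor
    · have : (0:ℝ) ≤ (2 * Real.pi)⁻¹ * (v ((a : ℤ) + k) - v (a : ℤ)) := by positivity
      linarith
    · have h2 : (2 * Real.pi)⁻¹ * (v ((a : ℤ) + k) - v (a : ℤ))
          < (2 * Real.pi)⁻¹ * Real.pi := by
        apply mul_lt_mul_of_pos_left hSπ (by positivity)
      have h3 : (2 * Real.pi)⁻¹ * Real.pi = 1 / 2 := by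
        field_simp
      linarith
  rw [hround]
  push_cast
  rw [zero_mul, sub_zero, abs_of_nonneg hS0]
  exact haS
end

section
/- There exists a subset X ⊆ S^1 of geodesic diameter exactly 2πk/(2k+1) (for example, the vertices of a regular (2k+1)-gon) such that no raked homogeneous trigonometric polynomial p(t) = ∑_{j=1}^{k} a_j cos((2j−1)t) + b_j sin((2j−1)t) is strictly positive on all of X. -/
open Real Finset

section helpers

lemma AC_norm_le (d : ℝ) (z : ℤ) : ‖((d : ℝ) : AddCircle (2 * Real.pi))‖ ≤ |d - z * (2 * Real.pi)| := by
  rw [AddCircle.norm_eq]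
  have hp : (0:ℝ) < 2 * Real.pi := by positivity
  have e1 : d - (round ((2*Real.pi)⁻¹ * d) : ℝ) * (2*Real.pi)
      = (2*Real.pi) * ((2*Real.pi)⁻¹ * d - (round ((2*Real.pi)⁻¹ * d) : ℝ)) := by
    field_simp
  have e2 : d - (z:ℝ) * (2*Real.pi) = (2*Real.pi) * ((2*Real.pi)⁻¹ * d - (z:ℝ)) := by
    field_simp
  rw [e1, e2, abs_mul, abs_mul (2*Real.pi), abs_of_pos hp]
  exact mul_le_mul_of_nonneg_left (round_le _ z) hp.le

lemma AC_norm_eq (d : ℝ) (h0 : 0 ≤ d) (h1 : d < Real.pi) :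
    ‖((d : ℝ) : AddCircle (2 * Real.pi))‖ = d := by
  rw [AddCircle.norm_eq]
  have hp : (0:ℝ) < 2 * Real.pi := by positivity
  have hr : round ((2*Real.pi)⁻¹ * d) = 0 := by
    rw [round_eq_zero_iff]
    constructor
    · have : 0 ≤ (2*Real.pi)⁻¹ * d := by positivity
      linarith
    · rw [inv_mul_lt_iff₀ hp]
      linarith
  rw [hr]
  simp [abs_of_nonneg h0]

lemma sum_cos_sin (N c : ℕ) (h1 : 0 < c) (h2 : c < N) :
    (∑ m ∈ Finset.range N, Real.cos (c * (2 * Real.pi * m / N)) = 0) ∧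
    (∑ m ∈ Finset.range N, Real.sin (c * (2 * Real.pi * m / N)) = 0) := by
  have hN : (0:ℝ) < N := by exact_mod_cast h1.trans h2
  have hNC : (N:ℂ) ≠ 0 := by exact_mod_cast hN.ne'
  set z : ℂ := Complex.exp ((2 * Real.pi * c / N : ℝ) * Complex.I) with hz
  have hzm : ∀ m : ℕ, z ^ m = Complex.exp ((c * (2 * Real.pi * m / N) : ℝ) * Complex.I) := by
    intro m
    rw [hz, ← Complex.exp_nat_mul]
    congr 1
    push_cast
    field_simp [hNC]
  have hzN : z ^ N = 1 := by
    rw [hz, ← Complex.exp_nat_mul]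
    rw [Complex.exp_eq_one_iff]
    refine ⟨c, ?_⟩
    push_cast
    field_simp [hNC]
  have hz1 : z ≠ 1 := by
    intro h
    obtain ⟨n, hn⟩ := Complex.exp_eq_one_iff.1 (hz ▸ h)
    have h3 : ((2 * Real.pi * c / N : ℝ) : ℂ) = (n : ℂ) * (2 * Real.pi) :=
      mul_right_cancel₀ Complex.I_ne_zero (by rw [hn]; push_cast; ring)
    have h4 : (2 * Real.pi * c / N : ℝ) = (n : ℝ) * (2 * Real.pi) := by exact_mod_cast h3
    have hpi := Real.pi_pos
    have hc : (0:ℝ) < c := by exact_mod_cast h1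
    have hcN : (c:ℝ) < N := by exact_mod_cast h2
    have hθpos : 0 < 2 * Real.pi * c / N := by positivity
    have hθlt : 2 * Real.pi * c / N < 2 * Real.pi := by
      rw [div_lt_iff₀ hN]; nlinarith
    have hn0 : (0:ℝ) < n := by nlinarith
    have hn1 : (n:ℝ) < 1 := by nlinarith
    have : (0:ℤ) < n := by exact_mod_cast hn0
    have : (n:ℤ) < 1 := by exact_mod_cast hn1
    omega
  have hsum : ∑ m ∈ Finset.range N, z ^ m = 0 := by
    rw [geom_sum_eq hz1, hzN]
    simp
  constructor
  · have : ∑ m ∈ Finset.range N, Real.cos (c * (2 * Real.pi * m / N))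
        = (∑ m ∈ Finset.range N, z ^ m).re := by
      rw [Complex.re_sum]
      refine Finset.sum_congr rfl fun m _ => ?_
      rw [hzm m, Complex.exp_ofReal_mul_I_re]
    rw [this, hsum, Complex.zero_re]
  · have : ∑ m ∈ Finset.range N, Real.sin (c * (2 * Real.pi * m / N))
        = (∑ m ∈ Finset.range N, z ^ m).im := by
      rw [Complex.im_sum]
      refine Finset.sum_congr rfl fun m _ => ?_
      rw [hzm m, Complex.exp_ofReal_mul_I_im]
    rw [this, hsum, Complex.zero_im]
end helpers

theorem raked_poly_not_positive (k : ℕ) :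
    ∃ X : Set ℝ, X.Nonempty ∧
      (∀ x ∈ X, ∀ y ∈ X, cdist x y ≤ 2 * Real.pi * k / (2 * k + 1)) ∧
      (∃ x ∈ X, ∃ y ∈ X, cdist x y = 2 * Real.pi * k / (2 * k + 1)) ∧
      ∀ a b : Fin k → ℝ, ¬ ∀ x ∈ X,
        0 < ∑ j : Fin k, (a j * Real.cos ((2 * (j : ℕ) + 1) * x) +
                          b j * Real.sin ((2 * (j : ℕ) + 1) * x)) := by
  set N : ℕ := 2 * k + 1 with hNdef
  have hNpos : 0 < N := by omega
  have hNR : (0:ℝ) < N := by exact_mod_cast hNpos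
  have hNcast : (N:ℝ) = 2 * k + 1 := by push_cast [hNdef]; ring
  have hpi := Real.pi_pos
  refine ⟨{x | ∃ m : ℕ, m < N ∧ x = 2 * Real.pi * m / N}, ⟨0, 0, hNpos, by simp⟩, ?_, ?_, ?_⟩
  · rintro x ⟨m, hm, rfl⟩ y ⟨l, hl, rfl⟩
    unfold cdist
    have hd : 2 * Real.pi * m / N - 2 * Real.pi * l / N
        = 2 * Real.pi * ((m:ℝ) - l) / N := by ring
    rw [hd]
    obtain ⟨z, hz1, hz2⟩ : ∃ z : ℤ, -(k:ℤ) ≤ ((m:ℤ) - l) - z * N ∧ ((m:ℤ) - l) - z * N ≤ k := by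
      refine ⟨if (k:ℤ) < (m:ℤ) - l then 1 else if (m:ℤ) - l < -(k:ℤ) then -1 else 0, ?_, ?_⟩ <;>
        split_ifs <;> omega
    have key : |2 * Real.pi * ((m:ℝ) - l) / N - z * (2 * Real.pi)|
        = (2 * Real.pi / N) * |((m:ℝ) - l - z * N)| := by
      have e : 2 * Real.pi * ((m:ℝ) - l) / N - z * (2 * Real.pi)
          = (2 * Real.pi / N) * ((m:ℝ) - l - z * N) := by field_simp
      rw [e, abs_mul, abs_of_pos (by positivity : (0:ℝ) < 2 * Real.pi / N)]
    have habs : |((m:ℝ) - l - z * N)| ≤ k := by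
      rw [abs_le]
      constructor <;> [exact_mod_cast hz1; exact_mod_cast hz2]
    calc ‖((2 * Real.pi * ((m:ℝ) - l) / N : ℝ) : AddCircle (2 * Real.pi))‖
        ≤ |2 * Real.pi * ((m:ℝ) - l) / N - z * (2 * Real.pi)| := AC_norm_le _ z
      _ = (2 * Real.pi / N) * |((m:ℝ) - l - z * N)| := key
      _ ≤ (2 * Real.pi / N) * k := mul_le_mul_of_nonneg_left habs (by positivity)
      _ = 2 * Real.pi * k / (2 * k + 1) := by rw [hNcast]; ring
  · refine ⟨2 * Real.pi * k / N, ⟨k, by omega, rfl⟩, 0, ⟨0, hNpos, by simp⟩, ?_⟩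
    unfold cdist
    rw [sub_zero]
    have h0 : (0:ℝ) ≤ 2 * Real.pi * k / N := by positivity
    have h1 : 2 * Real.pi * k / N < Real.pi := by
      rw [div_lt_iff₀ hNR, hNcast]
      nlinarith
    rw [AC_norm_eq _ h0 h1, hNcast]
  · intro a b h
    have hpos : 0 < ∑ m ∈ Finset.range N, ∑ j : Fin k,
        (a j * Real.cos ((2 * (j:ℕ) + 1) * (2 * Real.pi * m / N)) +
         b j * Real.sin ((2 * (j:ℕ) + 1) * (2 * Real.pi * m / N))) := by
      refine Finset.sum_pos (fun m hm => h _ ⟨m, Finset.mem_range.1 hm, rfl⟩) ⟨0, Finset.mem_range.2 hNpos⟩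
    have hzero : ∑ m ∈ Finset.range N, ∑ j : Fin k,
        (a j * Real.cos ((2 * (j:ℕ) + 1) * (2 * Real.pi * m / N)) +
         b j * Real.sin ((2 * (j:ℕ) + 1) * (2 * Real.pi * m / N))) = 0 := by
      rw [Finset.sum_comm]
      refine Finset.sum_eq_zero fun j _ => ?_
      obtain ⟨hc, hs⟩ := sum_cos_sin N (2 * (j:ℕ) + 1) (by omega) (by have := j.isLt; omega)
      have hcc : ∑ m ∈ Finset.range N,
          Real.cos ((2 * (j:ℕ) + 1) * (2 * Real.pi * m / N)) = 0 := by
        rw [← hc]; exact Finset.sum_congr rfl fun m _ => by push_cast; ring_nf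
      have hss : ∑ m ∈ Finset.range N,
          Real.sin ((2 * (j:ℕ) + 1) * (2 * Real.pi * m / N)) = 0 := by
        rw [← hs]; exact Finset.sum_congr rfl fun m _ => by push_cast; ring_nf
      rw [Finset.sum_add_distrib, ← Finset.mul_sum, ← Finset.mul_sum, hcc, hss]
      ring
    linarith
end

section
/- Fix odd continuous functions f_1, ..., f_{2k+1} : S^1 → ℝ. Then there is a subset X ⊆ S^1 of geodesic diameter at most 2πk/(2k+1) such that no linear combination p(t) = ∑_{j=1}^{2k+1} z_j f_j(t) with real coefficients z_j is strictly positive on all of X. -/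
/-- Integer rounding lemma: `2d + Nη` is within `N-1` of a multiple of `2N`. -/
lemma int_round_aux (N d η : ℤ) (hNodd : Odd N) (hN : 0 < N) (hd : |d| < N)
    (hη : η = 0 ∨ η = 1 ∨ η = -1) (h0 : η ≠ 0 → d ≠ 0) :
    ∃ m : ℤ, |2 * d + N * η - 2 * N * m| ≤ N - 1 := by
  set r : ℤ := 2 * d + N * η with hr
  have h2N : (0:ℤ) < 2 * N := by linarith
  refine ⟨(r + N) / (2 * N), ?_⟩
  have hdiv := Int.mul_ediv_add_emod (r + N) (2 * N)
  set s : ℤ := (r + N) % (2 * N) with hs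
  have hs0 : 0 ≤ s := Int.emod_nonneg _ (by linarith)
  have hs1 : s < 2 * N := Int.emod_lt_of_pos _ h2N
  have key : r - 2 * N * ((r + N) / (2 * N)) = s - N := by linarith
  rw [key]
  have hsne : s ≠ 0 := by
    intro hzero
    have hdvd : (2 * N) ∣ (r + N) := Int.dvd_of_emod_eq_zero hzero
    rcases hη with h1 | h1 | h1
    · -- r + N = 2d + N is odd, cannot be divisible by even 2N
      obtain ⟨q, hq⟩ := hdvd
      obtain ⟨t, ht⟩ := hNodd
      rw [hr, h1] at hq
      have hq' : 2 * d + N = 2 * (N * q) := by linarith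
      omega
    · -- η = 1 : 2N ∣ 2d + 2N, so N ∣ d, so d = 0, contradiction
      have hNd : N ∣ d := by
        obtain ⟨q, hq⟩ := hdvd
        refine ⟨q - 1, ?_⟩
        rw [hr, h1] at hq
        have hq' : 2 * d = 2 * (N * q) - 2 * N := by linarith
        have h2 : N * (q - 1) = N * q - N := by ring
        linarith [h2]
      have := Int.eq_zero_of_abs_lt_dvd hNd hd
      exact h0 (by norm_num [h1]) this
    · -- η = -1 : 2N ∣ 2d
      have hNd : N ∣ d := by
        obtain ⟨q, hq⟩ := hdvd
        refine ⟨q, ?_⟩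
        rw [hr, h1] at hq
        linarith [hq]
      have := Int.eq_zero_of_abs_lt_dvd hNd hd
      exact h0 (by norm_num [h1]) this
  rw [abs_le]
  omega

theorem odd_functions_not_positive (k : ℕ) (f : Fin (2 * k + 1) → ℝ → ℝ)
    (hc : ∀ j, Continuous (f j)) (hodd : ∀ j t, f j (t + Real.pi) = -f j t) :
    ∃ X : Set ℝ, (∀ x ∈ X, ∀ y ∈ X, cdist x y ≤ 2 * Real.pi * k / (2 * k + 1)) ∧
      ∀ z : Fin (2 * k + 1) → ℝ, ¬ ∀ x ∈ X, 0 < ∑ j, z j * f j x := by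
  have hπ := Real.pi_pos
  have hNR : (0:ℝ) < ((2 * k + 1 : ℕ) : ℝ) := by positivity
  set c : ℝ := Real.pi / ((2 * k + 1 : ℕ) : ℝ) with hcdef
  have hc0 : 0 < c := by positivity
  have hπNc : Real.pi = ((2 * k + 1 : ℕ) : ℝ) * c := by
    rw [hcdef]; field_simp
  -- the matrix of values at the 2k+1 points a + 2cj
  set M : ℝ → Matrix (Fin (2 * k + 1)) (Fin (2 * k + 1)) ℝ :=
    fun a => Matrix.of (fun i j => f i (a + 2 * c * (j : ℕ))) with hM
  have hDcont : Continuous fun a => (M a).det := by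
    apply Continuous.matrix_det
    apply continuous_matrix
    intro i j
    exact (hc i).comp (continuous_id.add continuous_const)
  have hDneg : (M (0 + Real.pi)).det = -(M 0).det := by
    have hMeq : M (0 + Real.pi) = -M 0 := by
      ext i j
      show f i (0 + Real.pi + 2 * c * (j : ℕ)) = -f i (0 + 2 * c * (j : ℕ))
      rw [show (0:ℝ) + Real.pi + 2 * c * (j:ℕ) = (0 + 2 * c * (j:ℕ)) + Real.pi by ring,
        hodd]
    rw [hMeq, Matrix.det_neg, Fintype.card_fin]
    have : ((-1:ℝ)) ^ (2 * k + 1) = -1 := Odd.neg_one_pow ⟨k, by ring⟩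
    rw [this]; ring
  -- IVT: determinant vanishes somewhere
  have h0mem : (0:ℝ) ∈ Set.uIcc ((M 0).det) ((M (0 + Real.pi)).det) := by
    rw [hDneg]
    rcases le_total ((M 0).det) 0 with h | h
    · exact Set.mem_uIcc.2 (Or.inl ⟨h, by linarith⟩)
    · exact Set.mem_uIcc.2 (Or.inr ⟨by linarith, h⟩)
  obtain ⟨a₀, -, hDa₀⟩ := intermediate_value_uIcc (hDcont.continuousOn) h0mem
  -- kernel vector
  obtain ⟨lam, hlam, hker⟩ := (Matrix.exists_mulVec_eq_zero_iff).2 hDa₀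
  -- the points, with antipodal flip where lam is negative
  set x : Fin (2 * k + 1) → ℝ :=
    fun j => a₀ + 2 * c * (j : ℕ) + (if lam j < 0 then Real.pi else 0) with hx
  refine ⟨x '' {j | lam j ≠ 0}, ?_, ?_⟩
  · -- diameter bound
    rintro u ⟨j, -, rfl⟩ v ⟨j', -, rfl⟩
    set e : Fin (2 * k + 1) → ℤ := fun j => if lam j < 0 then 1 else 0 with he
    set d : ℤ := ((j : ℕ) : ℤ) - ((j' : ℕ) : ℤ) with hdd
    set η : ℤ := e j - e j' with hηd
    have hjlt := j.isLt
    have hj'lt := j'.isLt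
    have hd : |d| < ((2 * k + 1 : ℕ) : ℤ) := by
      rw [abs_lt]; omega
    have hη : η = 0 ∨ η = 1 ∨ η = -1 := by
      rw [hηd, he]
      by_cases h1 : lam j < 0 <;> by_cases h2 : lam j' < 0 <;> simp [h1, h2]
    have h0 : η ≠ 0 → d ≠ 0 := by
      intro hne hd0
      apply hne
      have : j = j' := by
        apply Fin.ext; omega
      rw [hηd, this, sub_self]
    obtain ⟨m, hm⟩ := int_round_aux ((2 * k + 1 : ℕ) : ℤ) d η
      ⟨(k : ℤ), by push_cast; ring⟩ (by positivity) hd hη h0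
    -- the real difference
    have hdiff : x j - x j' - 2 * Real.pi * m
        = c * ((2 * d + ((2 * k + 1 : ℕ) : ℤ) * η - 2 * ((2 * k + 1 : ℕ) : ℤ) * m : ℤ) : ℝ) := by
      simp only [hx, hηd, he, hdd]
      rw [hπNc]
      by_cases h1 : lam j < 0 <;> by_cases h2 : lam j' < 0 <;>
        simp only [h1, h2, if_true, if_false] <;> push_cast <;> ring
    have hcoe : ((x j - x j' : ℝ) : AddCircle (2 * Real.pi))
        = ((x j - x j' - 2 * Real.pi * m : ℝ) : AddCircle (2 * Real.pi)) := by
      rw [QuotientAddGroup.eq_iff_sub_mem]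
      refine AddSubgroup.mem_zmultiples_iff.2 ⟨m, ?_⟩
      simp [zsmul_eq_mul]; ring
    have hnorm : ‖((x j - x j' - 2 * Real.pi * m : ℝ) : AddCircle (2 * Real.pi))‖
        ≤ |x j - x j' - 2 * Real.pi * m| := by
      simpa using QuotientAddGroup.norm_mk_le_norm (S := AddSubgroup.zmultiples (2 * Real.pi))
        (m := x j - x j' - 2 * Real.pi * m)
    have hbound : cdist (x j) (x j') ≤ c * (((2 * k + 1 : ℕ) : ℝ) - 1) := by
      unfold cdist
      rw [hcoe]
      refine le_trans hnorm ?_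
      rw [hdiff, abs_mul, abs_of_pos hc0]
      have hcast : |((2 * d + ((2 * k + 1 : ℕ) : ℤ) * η - 2 * ((2 * k + 1 : ℕ) : ℤ) * m : ℤ) : ℝ)|
          ≤ ((2 * k + 1 : ℕ) : ℝ) - 1 := by
        rw [← Int.cast_abs]
        have : (|2 * d + ((2 * k + 1 : ℕ) : ℤ) * η - 2 * ((2 * k + 1 : ℕ) : ℤ) * m| : ℝ)
            ≤ ((((2 * k + 1 : ℕ) : ℤ) - 1 : ℤ) : ℝ) := by exact_mod_cast hm
        push_cast at this ⊢
        linarith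
      exact mul_le_mul_of_nonneg_left hcast hc0.le
    have hEq : c * (((2 * k + 1 : ℕ) : ℝ) - 1) = 2 * Real.pi * (k:ℝ) / (2 * (k:ℝ) + 1) := by
      have h1 : ((2 * k + 1 : ℕ) : ℝ) = 2 * (k:ℝ) + 1 := by push_cast; ring
      have h2 : (2 * (k:ℝ) + 1) ≠ 0 := by positivity
      rw [hcdef, h1]
      field_simp
      ring
    rw [← hEq]
    exact hbound
  · -- no positive combination
    intro z hzpos
    obtain ⟨j₀, hj₀⟩ : ∃ j, lam j ≠ 0 := by
      by_contra h
      push_neg at h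
      exact hlam (funext h)
    have hcol : ∀ i, ∑ j, |lam j| * f i (x j) = 0 := by
      intro i
      have h1 : ∀ j, |lam j| * f i (x j) = lam j * f i (a₀ + 2 * c * (j : ℕ)) := by
        intro j
        by_cases hj : lam j < 0
        · rw [hx]
          simp only [if_pos hj]
          rw [hodd, abs_of_neg hj]
          ring
        · rw [hx]
          simp only [if_neg hj, add_zero]
          rw [abs_of_nonneg (not_lt.1 hj)]
      calc ∑ j, |lam j| * f i (x j) = ∑ j, lam j * f i (a₀ + 2 * c * (j : ℕ)) :=
            Finset.sum_congr rfl (fun j _ => h1 j)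
        _ = (M a₀).mulVec lam i := by
            simp only [Matrix.mulVec, dotProduct, hM, Matrix.of_apply]
            exact Finset.sum_congr rfl (fun j _ => (mul_comm _ _))
        _ = 0 := by rw [hker]; rfl
    have hsum : ∑ j, |lam j| * (∑ i, z i * f i (x j)) = 0 := by
      have hswap : ∑ j, |lam j| * (∑ i, z i * f i (x j))
          = ∑ i, z i * (∑ j, |lam j| * f i (x j)) := by
        simp_rw [Finset.mul_sum]
        rw [Finset.sum_comm]
        exact Finset.sum_congr rfl fun i _ => Finset.sum_congr rfl fun j _ => by ring
      rw [hswap]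
      simp [hcol]
    have hpos : 0 < ∑ j, |lam j| * (∑ i, z i * f i (x j)) := by
      apply Finset.sum_pos'
      · intro j _
        by_cases hj : lam j = 0
        · simp [hj]
        · exact mul_nonneg (abs_nonneg _) (hzpos (x j) ⟨j, hj, rfl⟩).le
      · exact ⟨j₀, Finset.mem_univ _,
          mul_pos (abs_pos.2 hj₀) (hzpos (x j₀) ⟨j₀, hj₀, rfl⟩)⟩
    exact absurd hsum (ne_of_gt hpos)
end

section
/- Fix distinct points v_1, ..., v_{2k−1} ∈ S^1 with no two antipodal, and define f(t) = ∏_{l=1}^{2k−1} sin(v_l − t). Then f is a raked homogeneous trigonometric polynomial of degree 2k−1 (a real linear combination of cos((2j−1)t) and sin((2j−1)t) for 1 ≤ j ≤ k), its zero set on S^1 is exactly {v_1, ..., v_{2k−1}} ∪ {v_1+π, ..., v_{2k−1}+π}, and for t outside this set sign(f(t)) = (−1)^{ρ(t)} where ρ(t) is the number of v_l in the open counterclockwise arc (t+π, t). -/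
/-- Generators: cosines with integer frequency of controlled size and parity. -/
def rakedGen (n : ℕ) : Set (ℝ → ℝ) :=
  {f | ∃ (m : ℤ) (φ : ℝ), m.natAbs ≤ n ∧ m % 2 = (n : ℤ) % 2 ∧
        f = fun t => Real.cos (m * t + φ)}

lemma cos_mul_sin_aux (a b : ℝ) :
    Real.cos a * Real.sin b
      = (1/2) * Real.cos (a + b - Real.pi/2) - (1/2) * Real.cos (a - b - Real.pi/2) := by
  rw [Real.cos_sub_pi_div_two, Real.cos_sub_pi_div_two, Real.sin_add, Real.sin_sub]
  ring

lemma prod_sin_mem_span (n : ℕ) (v : Fin n → ℝ) :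
    (fun t => ∏ l, Real.sin (v l - t)) ∈ Submodule.span ℝ (rakedGen n) := by
  induction n with
  | zero =>
      apply Submodule.subset_span
      exact ⟨0, 0, by simp, by simp, by funext t; simp⟩
  | succ n ih =>
      have key : (fun t => ∏ l, Real.sin (v l - t))
          = (LinearMap.mulRight ℝ (fun t => Real.sin (v (Fin.last n) - t)))
              (fun t => ∏ l : Fin n, Real.sin (v l.castSucc - t)) := by
        funext t
        simp [Fin.prod_univ_castSucc]
      rw [key]
      have h1 := ih (fun l => v l.castSucc)
      have hle : Submodule.map (LinearMap.mulRight ℝ (fun t => Real.sin (v (Fin.last n) - t)))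
          (Submodule.span ℝ (rakedGen n)) ≤ Submodule.span ℝ (rakedGen (n+1)) := by
        rw [Submodule.map_span, Submodule.span_le]
        rintro f ⟨g, ⟨m, φ, hm, hp, rfl⟩, rfl⟩
        set w := v (Fin.last n) with hw
        have heq : (LinearMap.mulRight ℝ (fun t => Real.sin (w - t)))
              (fun t => Real.cos (m * t + φ))
            = (1/2 : ℝ) • (fun t => Real.cos (((m - 1 : ℤ)) * t + (φ + w - Real.pi/2)))
              - (1/2 : ℝ) • (fun t => Real.cos (((m + 1 : ℤ)) * t + (φ - w - Real.pi/2))) := by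
          funext t
          simp only [LinearMap.mulRight_apply, Pi.mul_apply, Pi.sub_apply, Pi.smul_apply,
            smul_eq_mul]
          rw [cos_mul_sin_aux]
          push_cast
          ring_nf
        rw [heq]
        refine sub_mem (Submodule.smul_mem _ _ (Submodule.subset_span ?_))
          (Submodule.smul_mem _ _ (Submodule.subset_span ?_))
        · exact ⟨m - 1, φ + w - Real.pi/2, by omega, by push_cast; omega, rfl⟩
        · exact ⟨m + 1, φ - w - Real.pi/2, by omega, by push_cast; omega, rfl⟩
      exact hle (Submodule.mem_map_of_mem h1)

lemma sin_neg_iff_inArcPi (t x : ℝ) (h : Real.sin (x - t) ≠ 0) :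
    Real.sin (x - t) < 0 ↔ inArcPi t x := by
  have hpi := Real.pi_pos
  constructor
  · intro hneg
    set m : ℤ := ⌊(x - t) / (2 * Real.pi)⌋ with hm
    have h2pi : (0:ℝ) < 2 * Real.pi := by linarith
    have h0 : 0 ≤ (x - t) - m * (2 * Real.pi) := by
      simpa [hm] using Int.sub_floor_div_mul_nonneg (x - t) h2pi
    have h1 : (x - t) - m * (2 * Real.pi) < 2 * Real.pi := by
      simpa [hm] using Int.sub_floor_div_mul_lt (x - t) h2pi
    set r : ℝ := (x - t) - m * (2 * Real.pi) with hr
    have hsr : Real.sin r = Real.sin (x - t) := by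
      have := Real.sin_add_int_mul_two_pi r m
      simpa [hr] using this
    have hrgt : Real.pi < r := by
      by_contra hc
      push_neg at hc
      have := Real.sin_nonneg_of_nonneg_of_le_pi h0 hc
      rw [hsr] at this
      linarith
    refine ⟨r - Real.pi, by linarith, by linarith, m, ?_⟩
    simp only [hr]
    ring
  · rintro ⟨s, hs0, hsπ, m, rfl⟩
    have hx : (t + Real.pi + s + 2 * Real.pi * m) - t = (Real.pi + s) + m * (2 * Real.pi) := by
      ring
    rw [hx, Real.sin_add_int_mul_two_pi, Real.sin_add]
    have hsin : 0 < Real.sin s := Real.sin_pos_of_pos_of_lt_pi hs0 hsπ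
    simp [Real.sin_pi, Real.cos_pi]
    linarith

lemma sign_prod_eq (n : ℕ) (f : Fin n → ℝ) (h : ∀ i, f i ≠ 0) :
    Real.sign (∏ i, f i) =
      (-1 : ℝ) ^ (Finset.univ.filter (fun i => f i < 0)).card := by
  classical
  have hprod : (∏ i, f i)
      = (∏ i, |f i|) * (-1 : ℝ) ^ (Finset.univ.filter (fun i => f i < 0)).card := by
    have h1 : (∏ i, f i) = ∏ i, (|f i| * (if f i < 0 then (-1 : ℝ) else 1)) := by
      refine Finset.prod_congr rfl fun i _ => ?_
      rcases lt_or_gt_of_ne (h i) with hi | hi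
      · rw [if_pos hi, abs_of_neg hi]; ring
      · rw [if_neg (not_lt.2 hi.le), abs_of_pos hi]; ring
    rw [h1, Finset.prod_mul_distrib]
    congr 1
    rw [Finset.prod_ite, Finset.prod_const, Finset.prod_const, one_pow, mul_one]
  have hpos : 0 < ∏ i, |f i| := Finset.prod_pos fun i _ => abs_pos.2 (h i)
  rw [hprod]
  rcases Nat.even_or_odd (Finset.univ.filter (fun i => f i < 0)).card with he | ho
  · rw [he.neg_one_pow, mul_one, Real.sign_of_pos hpos]
  · rw [ho.neg_one_pow, mul_neg_one]
    rw [Real.sign_of_neg (by linarith)]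

theorem raked_poly_sign (k : ℕ) (hk : 1 ≤ k) (v : Fin (2 * k - 1) → ℝ)
    (hv : ∀ l l' : Fin (2 * k - 1), l ≠ l' → ∀ m : ℤ, v l - v l' ≠ m * Real.pi) :
    (∃ a b : Fin k → ℝ, ∀ t : ℝ,
        (∏ l, Real.sin (v l - t)) =
          ∑ j : Fin k, (a j * Real.cos ((2 * (j : ℕ) + 1) * t) +
                        b j * Real.sin ((2 * (j : ℕ) + 1) * t))) ∧
    (∀ t : ℝ, (∏ l, Real.sin (v l - t)) = 0 ↔ ∃ l, ∃ m : ℤ, t = v l + m * Real.pi) ∧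
    (∀ t : ℝ, (∏ l, Real.sin (v l - t)) ≠ 0 →
      Real.sign (∏ l, Real.sin (v l - t)) =
        (-1 : ℝ) ^ ({l : Fin (2 * k - 1) | inArcPi t (v l)}.ncard)) := by
  classical
  refine ⟨?_, ?_, ?_⟩
  · -- Part 1: raked polynomial form
    set basis : Fin k ⊕ Fin k → (ℝ → ℝ) :=
      Sum.elim (fun j => fun t => Real.cos ((2 * (j : ℕ) + 1) * t))
               (fun j => fun t => Real.sin ((2 * (j : ℕ) + 1) * t)) with hbasis
    have hmem : (fun t => ∏ l, Real.sin (v l - t)) ∈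
        Submodule.span ℝ (Set.range basis) := by
      have h1 := prod_sin_mem_span (2 * k - 1) v
      refine Submodule.span_le.2 ?_ h1
      rintro f ⟨m, φ, hm, hp, rfl⟩
      have hodd : ((2 * k - 1 : ℕ) : ℤ) % 2 = 1 := by omega
      rw [hodd] at hp
      have hone : 1 ≤ m.natAbs := by omega
      obtain ⟨j, hjk, hj⟩ : ∃ j : ℕ, j < k ∧ m.natAbs = 2 * j + 1 := by
        refine ⟨(m.natAbs - 1) / 2, by omega, by omega⟩
      have hψ : ∃ ψ : ℝ, (fun t => Real.cos (↑m * t + φ))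
          = fun t => Real.cos ((2 * (j : ℕ) + 1) * t + ψ) := by
        rcases le_or_gt 0 m with hm0 | hm0
        · refine ⟨φ, ?_⟩
          have : (m : ℝ) = 2 * (j : ℕ) + 1 := by
            have : m = (m.natAbs : ℤ) := by omega
            rw [this, hj]; push_cast; ring
          rw [this]
        · refine ⟨-φ, ?_⟩
          have hmr : (m : ℝ) = -(2 * (j : ℕ) + 1) := by
            have : m = -(m.natAbs : ℤ) := by omega
            rw [this, hj]; push_cast; ring
          funext t
          rw [hmr, show (-(2 * (j:ℕ) + 1) : ℝ) * t + φ
                = -((2 * (j:ℕ) + 1) * t + -φ) by ring, Real.cos_neg]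
      obtain ⟨ψ, hψ⟩ := hψ
      rw [hψ]
      have : (fun t => Real.cos ((2 * (j : ℕ) + 1) * t + ψ))
          = Real.cos ψ • basis (Sum.inl ⟨j, hjk⟩) + (-Real.sin ψ) • basis (Sum.inr ⟨j, hjk⟩) := by
        funext t
        simp only [hbasis, Sum.elim_inl, Sum.elim_inr, Pi.add_apply, Pi.smul_apply, smul_eq_mul]
        rw [Real.cos_add]
        ring
      rw [this]
      exact add_mem
        (Submodule.smul_mem _ _ (Submodule.subset_span ⟨Sum.inl ⟨j, hjk⟩, rfl⟩))
        (Submodule.smul_mem _ _ (Submodule.subset_span ⟨Sum.inr ⟨j, hjk⟩, rfl⟩))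
    rw [Submodule.mem_span_range_iff_exists_fun] at hmem
    obtain ⟨c, hc⟩ := hmem
    refine ⟨fun j => c (Sum.inl j), fun j => c (Sum.inr j), fun t => ?_⟩
    have := congrFun hc t
    rw [Finset.sum_apply] at this
    rw [← this, Fintype.sum_sum_type]
    rw [← Finset.sum_add_distrib]
    refine Finset.sum_congr rfl fun j _ => ?_
    simp [hbasis, mul_comm]
  · -- Part 2: zero set
    intro t
    rw [Finset.prod_eq_zero_iff]
    constructor
    · rintro ⟨l, -, hl⟩
      obtain ⟨m, hm⟩ := Real.sin_eq_zero_iff.mp hl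
      exact ⟨l, -m, by push_cast; linarith⟩
    · rintro ⟨l, m, rfl⟩
      refine ⟨l, Finset.mem_univ l, Real.sin_eq_zero_iff.mpr ⟨-m, by push_cast; ring⟩⟩
  · -- Part 3: sign
    intro t ht
    have hne : ∀ l, Real.sin (v l - t) ≠ 0 := fun l =>
      Finset.prod_ne_zero_iff.mp ht l (Finset.mem_univ l)
    rw [sign_prod_eq _ _ hne]
    congr 1
    have h1 : {l : Fin (2 * k - 1) | inArcPi t (v l)}.ncard
        = (Finset.univ.filter fun l => inArcPi t (v l)).card := by
      rw [Set.ncard_eq_toFinset_card']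
      congr 1
      ext l
      simp
    rw [h1]
    congr 1
    ext l
    simp only [Finset.mem_filter, Finset.mem_univ, true_and]
    exact sin_neg_iff_inArcPi t (v l) (hne l)
end

section
/- For the standard inclusion f : S^n ↪ ℝ^{n+1} and any subset X ⊆ S^n of geodesic diameter strictly less than r_n = arccos(−1/(n+1)), the convex hull of X in ℝ^{n+1} does not contain the origin. -/
lemma arccos_antitone : Antitone Real.arccos := by
  intro a b h
  unfold Real.arccos
  have := Real.monotone_arcsin h
  linarith

theorem small_diam_hull_misses_origin (n : ℕ) (X : Set (EuclideanSpace ℝ (Fin (n + 1))))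
    (hXs : X ⊆ Metric.sphere (0 : EuclideanSpace ℝ (Fin (n + 1))) 1)
    (hX : ∀ x ∈ X, ∀ y ∈ X, Real.arccos (inner ℝ x y) < Real.arccos (-(1 / (n + 1)))) :
    (0 : EuclideanSpace ℝ (Fin (n + 1))) ∉ convexHull ℝ X := by
  classical
  intro hmem
  set c : ℝ := 1 / (n + 1) with hc
  have hcpos : 0 < c := by positivity
  obtain ⟨ι, hfin, z, w, hz, hai, hw, hw1, hsum⟩ :=
    eq_pos_convex_span_of_mem_convexHull hmem
  have hzx : ∀ i, z i ∈ X := fun i => hz ⟨i, rfl⟩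
  have hnorm : ∀ i, ‖z i‖ = 1 := by
    intro i
    have := hXs (hzx i)
    simpa [mem_sphere_zero_iff_norm] using this
  have hinner : ∀ i j, -c < (inner ℝ (z i) (z j) : ℝ) := by
    intro i j
    by_contra h
    push_neg at h
    have := arccos_antitone h
    exact absurd (hX _ (hzx i) _ (hzx j)) (not_lt.mpr this)
  have hinner_self : ∀ i, (inner ℝ (z i) (z i) : ℝ) = 1 := by
    intro i
    rw [real_inner_self_eq_norm_sq, hnorm i]; norm_num
  have hne : Nonempty ι := by
    by_contra h
    rw [not_nonempty_iff] at h
    simp [Finset.univ_eq_empty] at hw1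
  -- cardinality bound
  have hK : Fintype.card ι ≤ n + 2 := by
    have h1 := hai.card_le_finrank_succ
    have h2 : Module.finrank ℝ (vectorSpan ℝ (Set.range z)) ≤ n + 1 := by
      have := Submodule.finrank_le (vectorSpan ℝ (Set.range z))
      simpa [finrank_euclideanSpace_fin] using this
    omega
  -- case: single point
  rcases le_or_gt (Fintype.card ι) 1 with hcard | hcard
  · have hcard1 : Fintype.card ι = 1 := le_antisymm hcard Fintype.card_pos
    obtain ⟨i0, hi0⟩ := Fintype.card_eq_one_iff.mp hcard1
    have huniv : (Finset.univ : Finset ι) = {i0} := by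
      ext i; simp [hi0 i]
    rw [huniv, Finset.sum_singleton] at hsum hw1
    rw [hw1, one_smul] at hsum
    have := hnorm i0
    rw [hsum] at this
    simp at this
  · -- main case: at least two points
    obtain ⟨i0, j0, hij0⟩ := Fintype.exists_pair_of_one_lt_card hcard
    have h0 : ∑ i, ∑ j, w i * w j * (inner ℝ (z i) (z j) : ℝ) = 0 := by
      have h00 : (inner ℝ ((0 : EuclideanSpace ℝ (Fin (n+1)))) ((0 : EuclideanSpace ℝ (Fin (n+1)))) : ℝ) = 0 := inner_zero_left _
      calc ∑ i, ∑ j, w i * w j * (inner ℝ (z i) (z j) : ℝ)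
          = (inner ℝ (∑ i, w i • z i) (∑ j, w j • z j) : ℝ) := by
            rw [sum_inner]
            refine Finset.sum_congr rfl fun i _ => ?_
            rw [inner_sum]
            refine Finset.sum_congr rfl fun j _ => ?_
            rw [real_inner_smul_left, real_inner_smul_right]
            ring
        _ = 0 := by rw [hsum]; exact h00
    -- lower bound each term
    have hgle : ∀ i j, w i * w j * (if i = j then (1:ℝ) else -c)
        ≤ w i * w j * (inner ℝ (z i) (z j) : ℝ) := by
      intro i j
      rcases eq_or_ne i j with rfl | hij
      · simp [hinner_self i, hnorm i]
      · simp only [if_neg hij]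
        exact mul_le_mul_of_nonneg_left (hinner i j).le (mul_pos (hw i) (hw j)).le
    have hstrict : w i0 * w j0 * (if i0 = j0 then (1:ℝ) else -c)
        < w i0 * w j0 * (inner ℝ (z i0) (z j0) : ℝ) := by
      simp only [if_neg hij0]
      exact mul_lt_mul_of_pos_left (hinner i0 j0) (mul_pos (hw i0) (hw j0))
    -- strict inequality on the double sum over the product finset
    have hsumlt : ∑ p : ι × ι, w p.1 * w p.2 * (if p.1 = p.2 then (1:ℝ) else -c)
        < ∑ p : ι × ι, w p.1 * w p.2 * (inner ℝ (z p.1) (z p.2) : ℝ) := by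
      apply Finset.sum_lt_sum
      · intro p _; exact hgle p.1 p.2
      · exact ⟨(i0, j0), Finset.mem_univ _, hstrict⟩
    have hrhs : ∑ p : ι × ι, w p.1 * w p.2 * (inner ℝ (z p.1) (z p.2) : ℝ) = 0 := by
      rw [← h0, ← Finset.sum_product']
      rfl
    -- compute the lower-bound sum
    have hlhs : ∑ p : ι × ι, w p.1 * w p.2 * (if p.1 = p.2 then (1:ℝ) else -c)
        = (1 + c) * (∑ i, (w i)^2) - c := by
      have : ∀ p : ι × ι, w p.1 * w p.2 * (if p.1 = p.2 then (1:ℝ) else -c)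
          = -c * (w p.1 * w p.2) + (if p.1 = p.2 then (1 + c) * (w p.1)^2 else 0) := by
        intro p
        rcases eq_or_ne p.1 p.2 with h | h
        · simp only [if_pos h]; rw [← h]; ring
        · simp only [if_neg h]; ring
      rw [Finset.sum_congr rfl fun p _ => this p, Finset.sum_add_distrib]
      have e1 : ∑ p : ι × ι, -c * (w p.1 * w p.2) = -c := by
        rw [← Finset.mul_sum, ← Finset.univ_product_univ, Finset.sum_product]
        simp [← Finset.mul_sum, hw1]
      have e2 : ∑ p : ι × ι, (if p.1 = p.2 then (1 + c) * (w p.1)^2 else 0)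
          = ∑ i, (1 + c) * (w i)^2 := by
        rw [← Finset.univ_product_univ, Finset.sum_product]
        refine Finset.sum_congr rfl fun i _ => ?_
        simp
      rw [e1, e2, Finset.mul_sum]
      ring
    -- ∑ w i ^ 2 ≥ 1 / (n+2)
    have hS : (1:ℝ) ≤ (n + 2) * ∑ i, (w i)^2 := by
      have h1 : ((∑ i, w i)^2 : ℝ) ≤ (Fintype.card ι : ℝ) * ∑ i, (w i)^2 := by
        have := sq_sum_le_card_mul_sum_sq (s := (Finset.univ : Finset ι)) (f := w)
        simpa using this
      have h2 : (Fintype.card ι : ℝ) ≤ (n + 2 : ℝ) := by exact_mod_cast hK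
      have h3 : (0:ℝ) ≤ ∑ i, (w i)^2 := Finset.sum_nonneg fun i _ => sq_nonneg _
      calc (1:ℝ) = (∑ i, w i)^2 := by rw [hw1]; norm_num
        _ ≤ (Fintype.card ι : ℝ) * ∑ i, (w i)^2 := h1
        _ ≤ (n + 2) * ∑ i, (w i)^2 := mul_le_mul_of_nonneg_right h2 h3
    have hmul : (1 + c) = (n + 2) * c := by
      rw [hc]; field_simp; ring
    have hlb : (0:ℝ) ≤ (1 + c) * (∑ i, (w i)^2) - c := by
      have h3 : (0:ℝ) ≤ (n + 2) * (∑ i, (w i)^2) - 1 := by linarith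
      nlinarith [mul_nonneg hcpos.le h3]
    rw [hrhs, hlhs] at hsumlt
    linarith
end
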